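/- arXiv:1602.07085 — 3 statements merged into one kernel-verified Lean document; each statement's English description precedes it below -/
import Mathlib

section
/- Let R be a commutative ring, let λ ∈ R, let A and C be λ-circulant n×n matrices over R, and let J be the back-diagonal permutation matrix of order n (with entries J_{i,n-i+1}=1 and 0 elsewhere). Then the matrix C' = C·J is symmetric, i.e., (C·J)ᵀ = C·J. -/
open Matrix Polynomial

/-- The `l`-circulant matrix with first row `a`: each row is the `l`-cyclic
shift of the previous one (last entry wraps to the front multiplied by `l`). -/
def lamCirc {R : Type*} [CommRing R] (n : ℕ) (l : R) (a : Fin n → R) :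
    Matrix (Fin n) (Fin n) R :=
  fun i j =>
    if h : (i : ℕ) ≤ (j : ℕ) then a ⟨(j : ℕ) - (i : ℕ), by have := j.isLt; omega⟩
    else l * a ⟨n + (j : ℕ) - (i : ℕ), by have := i.isLt; have := j.isLt; omega⟩

/-- `A` is an `l`-circulant matrix. -/
def IsLamCirc {R : Type*} [CommRing R] (n : ℕ) (l : R) (A : Matrix (Fin n) (Fin n) R) : Prop :=
  ∃ a : Fin n → R, A = lamCirc n l a

/-- The back-diagonal permutation matrix `J` with `J_{i, n-i+1} = 1` (1-indexed). -/
def backDiag {R : Type*} [CommRing R] (n : ℕ) : Matrix (Fin n) (Fin n) R :=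
  fun i j => if (i : ℕ) + (j : ℕ) + 1 = n then 1 else 0

theorem backDiag_eq_one_submatrix_rev {R : Type*} [CommRing R] (n : ℕ) :
    backDiag n = (1 : Matrix (Fin n) (Fin n) R).submatrix (Equiv.refl (Fin n)) Fin.rev := by
  ext i j
  have hj := j.isLt
  simp only [backDiag, submatrix_apply, Equiv.refl_apply, one_apply, Fin.ext_iff, Fin.val_rev]
  congr 1
  exact propext (by omega)

theorem mul_backDiag {R : Type*} [CommRing R] {n : ℕ} (M : Matrix (Fin n) (Fin n) R) :
    M * backDiag n = M.submatrix id Fin.rev := by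
  rw [backDiag_eq_one_submatrix_rev, mul_submatrix_one]
  rfl

/-- Both entries sit at the same offset `n - 1 - i - j` (mod `n`) above the diagonal. -/
theorem lamCirc_apply_rev_comm {R : Type*} [CommRing R] (n : ℕ) (l : R) (a : Fin n → R)
    (i j : Fin n) : lamCirc n l a i j.rev = lamCirc n l a j i.rev := by
  have hi := i.isLt
  have hj := j.isLt
  unfold lamCirc
  simp only [Fin.val_rev]
  by_cases h : (i : ℕ) ≤ n - (j + 1)
  · rw [dif_pos h, dif_pos (by omega)]
    congr 2
    omega
  · rw [dif_neg h, dif_neg (by omega)]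
    congr 3
    omega

theorem backDiag_mul_symmetric_general {R : Type*} [CommRing R] {n : ℕ} (l : R)
    (C : Matrix (Fin n) (Fin n) R)
    (hC : IsLamCirc n l C) :
    (C * backDiag n)ᵀ = C * backDiag n := by
  obtain ⟨c, rfl⟩ := hC
  ext i j
  simp only [transpose_apply, mul_backDiag, submatrix_apply, id_eq]
  exact lamCirc_apply_rev_comm n l c j i

/-- For λ-circulant matrices A, C, the matrix C·J is symmetric. -/
theorem backDiag_mul_symmetric {R : Type*} [CommRing R] {n : ℕ} (l : R)
    (A C : Matrix (Fin n) (Fin n) R)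
    (hA : IsLamCirc n l A) (hC : IsLamCirc n l C) :
    (C * backDiag n)ᵀ = C * backDiag n :=
  backDiag_mul_symmetric_general l C hC
end

section
/- Let R be a commutative ring, n ≥ 1, and let A, B, C, D be λ-circulant n×n matrices over R satisfying A·Aᵀ + B·Bᵀ + C·Cᵀ + D·Dᵀ = -I_n and A·Bᵀ - B·Aᵀ - C·Dᵀ + D·Cᵀ = 0. Let J be the back-diagonal matrix of order n and let M be the 4n×4n block matrix with block rows (A, B, CJ, DJ), (-B, A, DJ, -CJ), (-CJ, -DJ, A, B), (-DJ, CJ, -B, A). Then M·Mᵀ = -I_{4n}. -/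
open Matrix Polynomial

/-! A `λ`-circulant matrix `X` is persymmetric, so `X * J` is symmetric, and any two
`λ`-circulants commute. Hence `X * (Y * J)ᵀ = X * Y * J = Y * X * J = Y * J * Xᵀ` for
`λ`-circulants `X`, `Y`, while `X * J * (Y * J)ᵀ = X * Yᵀ` because `J` is a permutation matrix.
Writing `M = [[P, Q], [-Q, P]]` with `P = [[A, B], [-B, A]]` and `Q = [[C J, D J], [D J, -C J]]`,
the first identity gives `P * Qᵀ = Q * Pᵀ` and the second, with the two hypotheses,
`P * Pᵀ + Q * Qᵀ = -1`; so `M * Mᵀ = -1`. -/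

section

variable {R : Type*} [CommRing R] {n : ℕ}

theorem backDiag_apply (i j : Fin n) : backDiag (R := R) n i j = if i = j.rev then 1 else 0 := by
  have hi := i.isLt
  have hj := j.isLt
  unfold backDiag
  split_ifs <;> simp_all [Fin.ext_iff, Fin.val_rev] <;> omega

theorem mul_backDiag_apply {m : Type*} (X : Matrix m (Fin n) R) (i : m) (j : Fin n) :
    (X * backDiag (R := R) n) i j = X i j.rev := by
  simp [mul_apply, backDiag_apply]

theorem mul_backDiag_mul_transpose {m m' : Type*} (X : Matrix m (Fin n) R)
    (Y : Matrix m' (Fin n) R) :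
    X * backDiag (R := R) n * (Y * backDiag (R := R) n)ᵀ = X * Yᵀ := by
  ext i j
  rw [mul_apply, mul_apply]
  simp only [transpose_apply, mul_backDiag_apply]
  exact Fintype.sum_equiv Fin.revPerm _ _ fun k => by simp

theorem backDiag_transpose : (backDiag n : Matrix (Fin n) (Fin n) R)ᵀ = backDiag n := by
  ext i j
  simp only [transpose_apply, backDiag, add_comm (j : ℕ)]

theorem lamCirc_apply_eq_ite_mul (l : R) (a : Fin n → R) (i j : Fin n) :
    lamCirc n l a i j = (if j < i then l else 1) * a (j - i) := by
  unfold lamCirc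
  split_ifs with hij hji hji
  · omega
  · rw [one_mul]; congr 1; ext; exact (Fin.coe_sub_iff_le.2 hij).symm
  · congr 2; ext; exact (Fin.coe_sub_iff_lt.2 hji).symm
  · omega

theorem lamCirc_mul_backDiag_isSymm (l : R) (a : Fin n → R) :
    (lamCirc n l a * backDiag n).IsSymm := by
  ext i j
  rw [transpose_apply, mul_backDiag_apply, mul_backDiag_apply, lamCirc_apply_eq_ite_mul,
    lamCirc_apply_eq_ite_mul, ← Fin.rev_add, ← Fin.rev_add, add_comm]
  simp only [Fin.rev_lt_iff]

theorem lamCirc_mul_comm (l : R) (a b : Fin n → R) :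
    lamCirc n l a * lamCirc n l b = lamCirc n l b * lamCirc n l a := by
  cases n with
  | zero => exact Subsingleton.elim _ _
  | succ n =>
  ext i j
  simp only [mul_apply, lamCirc_apply_eq_ite_mul]
  -- `k ↦ i + j - k` swaps the index differences `k - i` and `j - k`; the case split checks that
  -- the number of wrap-arounds, i.e. the power of `l`, is unchanged.
  refine Fintype.sum_equiv (Equiv.subLeft (i + j)) _ _ fun k => ?_
  simp only [Equiv.subLeft_apply]
  have e1 : i + j - k - i = j - k := by abel
  have e2 : j - (i + j - k) = k - i := by abel
  have hσ := congrArg Fin.val (sub_add_cancel (i + j) k)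
  rw [Fin.val_add_eq_ite, Fin.val_add_eq_ite] at hσ
  have := i.isLt; have := j.isLt; have := k.isLt; have := (i + j - k).isLt
  rw [e1, e2]
  simp only [Fin.lt_def]
  split_ifs at hσ ⊢ <;> first | omega | ring

theorem IsLamCirc.mul_transpose_mul_backDiag {l : R} {A B : Matrix (Fin n) (Fin n) R}
    (hA : IsLamCirc n l A) (hB : IsLamCirc n l B) :
    A * (B * backDiag n)ᵀ = B * backDiag n * Aᵀ := by
  obtain ⟨a, rfl⟩ := hA
  obtain ⟨b, rfl⟩ := hB
  calc lamCirc n l a * (lamCirc n l b * backDiag n)ᵀ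
      = lamCirc n l a * (lamCirc n l b * backDiag n) := by
        rw [(lamCirc_mul_backDiag_isSymm l b).eq]
    _ = lamCirc n l b * (lamCirc n l a * backDiag n) := by
        rw [← Matrix.mul_assoc, lamCirc_mul_comm, Matrix.mul_assoc]
    _ = lamCirc n l b * backDiag n * (lamCirc n l a)ᵀ := by
        rw [← (lamCirc_mul_backDiag_isSymm l a).eq, transpose_mul, backDiag_transpose,
          ← Matrix.mul_assoc]

end

section

variable {R m k : Type*} [Ring R]

theorem fromBlocks_neg_one [DecidableEq m] [DecidableEq k] :
    fromBlocks (-1 : Matrix m m R) 0 0 (-1 : Matrix k k R) = -1 := by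
  rw [← fromBlocks_one, fromBlocks_neg, neg_zero, neg_zero]

variable [Fintype k]

theorem fromBlocks_neg_lower_left_mul_transpose_self (P Q : Matrix m k R) :
    fromBlocks P Q (-Q) P * (fromBlocks P Q (-Q) P)ᵀ =
      fromBlocks (P * Pᵀ + Q * Qᵀ) (Q * Pᵀ - P * Qᵀ) (-(Q * Pᵀ - P * Qᵀ))
        (P * Pᵀ + Q * Qᵀ) := by
  simp only [fromBlocks_transpose, fromBlocks_multiply, transpose_neg, Matrix.mul_neg,
    Matrix.neg_mul, neg_neg]
  congr 1 <;> abel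

theorem fromBlocks_neg_lower_right_mul_transpose_self (X Y : Matrix m k R) :
    fromBlocks X Y Y (-X) * (fromBlocks X Y Y (-X))ᵀ =
      fromBlocks (X * Xᵀ + Y * Yᵀ) (X * Yᵀ - Y * Xᵀ) (-(X * Yᵀ - Y * Xᵀ))
        (X * Xᵀ + Y * Yᵀ) := by
  simp only [fromBlocks_transpose, fromBlocks_multiply, transpose_neg, Matrix.mul_neg,
    Matrix.neg_mul, neg_neg]
  congr 1 <;> abel

end

theorem construction_I_matrix_general {R : Type*} [CommRing R] {n : ℕ} (l : R)
    (A B C D : Matrix (Fin n) (Fin n) R)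
    (hA : IsLamCirc n l A) (hB : IsLamCirc n l B)
    (hC : IsLamCirc n l C) (hD : IsLamCirc n l D)
    (h1 : A * Aᵀ + B * Bᵀ + C * Cᵀ + D * Dᵀ = -1)
    (h2 : A * Bᵀ - B * Aᵀ - C * Dᵀ + D * Cᵀ = 0) :
    let J : Matrix (Fin n) (Fin n) R := backDiag n
    let M : Matrix ((Fin n ⊕ Fin n) ⊕ (Fin n ⊕ Fin n)) ((Fin n ⊕ Fin n) ⊕ (Fin n ⊕ Fin n)) R :=
      Matrix.fromBlocks
        (Matrix.fromBlocks A B (-B) A)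
        (Matrix.fromBlocks (C * J) (D * J) (D * J) (-(C * J)))
        (Matrix.fromBlocks (-(C * J)) (-(D * J)) (-(D * J)) (C * J))
        (Matrix.fromBlocks A B (-B) A)
    M * Mᵀ = -1 := by
  intro J M
  set P := fromBlocks A B (-B) A
  set Q := fromBlocks (C * J) (D * J) (D * J) (-(C * J))
  have hM : M = fromBlocks P Q (-Q) P := by simp only [M, P, Q, fromBlocks_neg, neg_neg]
  have hswap {X Y} (hX : IsLamCirc n l X) (hY : IsLamCirc n l Y) : X * (Y * J)ᵀ = Y * J * Xᵀ :=
    hX.mul_transpose_mul_backDiag hY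
  have hPQ : P * Qᵀ = Q * Pᵀ := by
    simp only [P, Q, fromBlocks_transpose, fromBlocks_multiply, transpose_neg, Matrix.mul_neg,
      Matrix.neg_mul, hswap hA hC, hswap hA hD, hswap hB hC, hswap hB hD]
    congr 1 <;> abel
  have hPP : P * Pᵀ + Q * Qᵀ = -1 := by
    have hdiag : A * Aᵀ + B * Bᵀ + (C * Cᵀ + D * Dᵀ) = -1 := by rw [← h1]; abel
    have hoff : B * Aᵀ - A * Bᵀ + (C * Dᵀ - D * Cᵀ) = 0 := by
      linear_combination (norm := abel) -h2
    rw [fromBlocks_neg_lower_left_mul_transpose_self,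
      fromBlocks_neg_lower_right_mul_transpose_self, fromBlocks_add, ← neg_add]
    simp only [J, mul_backDiag_mul_transpose, hdiag, hoff, neg_zero, fromBlocks_neg_one]
  rw [hM, fromBlocks_neg_lower_left_mul_transpose_self, hPQ, sub_self, neg_zero, hPP,
    fromBlocks_neg_one]

/-- Construction I (short Kharaghani array): the key matrix identity M·Mᵀ = -I. -/
theorem construction_I_matrix {R : Type*} [CommRing R] {n : ℕ} (hn : 1 ≤ n) (l : R)
    (A B C D : Matrix (Fin n) (Fin n) R)
    (hA : IsLamCirc n l A) (hB : IsLamCirc n l B)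
    (hC : IsLamCirc n l C) (hD : IsLamCirc n l D)
    (h1 : A * Aᵀ + B * Bᵀ + C * Cᵀ + D * Dᵀ = -1)
    (h2 : A * Bᵀ - B * Aᵀ - C * Dᵀ + D * Cᵀ = 0) :
    let J : Matrix (Fin n) (Fin n) R := backDiag n
    let M : Matrix ((Fin n ⊕ Fin n) ⊕ (Fin n ⊕ Fin n)) ((Fin n ⊕ Fin n) ⊕ (Fin n ⊕ Fin n)) R :=
      Matrix.fromBlocks
        (Matrix.fromBlocks A B (-B) A)
        (Matrix.fromBlocks (C * J) (D * J) (D * J) (-(C * J)))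
        (Matrix.fromBlocks (-(C * J)) (-(D * J)) (-(D * J)) (C * J))
        (Matrix.fromBlocks A B (-B) A)
    M * Mᵀ = -1 :=
  construction_I_matrix_general l A B C D hA hB hC hD h1 h2
end

section
/- The Gray map φ : (F₂ + uF₂)ⁿ → F₂^{2n}, φ(a + bu) = (b, a + b), preserves duality: for x, y ∈ (F₂ + uF₂)ⁿ, if the Euclidean inner product ⟨x,y⟩ = 0 in F₂ + uF₂, then ⟨φ(x), φ(y)⟩ = 0 in F₂. Consequently, if C is a self-orthogonal linear code over F₂ + uF₂, then φ(C) is a self-orthogonal binary code. -/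
open Matrix Polynomial

/-! In characteristic 2 the Gray map turns the product `(a + bu)(c + du) = ac + (ad + bc)u` into
`bd + (a + b)(c + d) = ac + ad + bc`, the sum of its two components. Hence the binary inner
product of the Gray images is the sum of the two components of the inner product over
`R[u]/(u²)`, which vanishes whenever that inner product does. -/

def grayMap {ι R : Type*} [Add R] (x : ι → DualNumber R) : ι ⊕ ι → R :=
  Sum.elim (fun i => (x i).snd) (fun i => (x i).fst + (x i).snd)

section CharTwo

variable {ι R : Type*} [Fintype ι] [CommSemiring R] [CharP R 2]

theorem DualNumber.snd_mul_snd_add_fst_add_snd_mul (x y : DualNumber R) :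
    x.snd * y.snd + (x.fst + x.snd) * (y.fst + y.snd) = (x * y).fst + (x * y).snd := by
  rw [TrivSqZeroExt.fst_mul, DualNumber.snd_mul]
  calc x.snd * y.snd + (x.fst + x.snd) * (y.fst + y.snd)
      = x.fst * y.fst + (x.fst * y.snd + x.snd * y.fst) + (x.snd * y.snd + x.snd * y.snd) := by
        ring
    _ = x.fst * y.fst + (x.fst * y.snd + x.snd * y.fst) := by
        rw [CharTwo.add_self_eq_zero, add_zero]

theorem grayMap_dotProduct_grayMap (x y : ι → DualNumber R) :
    grayMap x ⬝ᵥ grayMap y = (x ⬝ᵥ y).fst + (x ⬝ᵥ y).snd := by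
  simp only [dotProduct, grayMap, Fintype.sum_sum_type, Sum.elim_inl, Sum.elim_inr,
    ← Finset.sum_add_distrib, DualNumber.snd_mul_snd_add_fst_add_snd_mul,
    TrivSqZeroExt.fst_sum, TrivSqZeroExt.snd_sum]

theorem grayMap_dotProduct_grayMap_eq_zero {x y : ι → DualNumber R} (h : x ⬝ᵥ y = 0) :
    grayMap x ⬝ᵥ grayMap y = 0 := by
  rw [grayMap_dotProduct_grayMap, h, TrivSqZeroExt.fst_zero, TrivSqZeroExt.snd_zero, add_zero]

end CharTwo

/-- The Gray map preserves duality: orthogonal vectors map to orthogonal vectors,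
and Gray images of self-orthogonal codes over F₂+uF₂ are self-orthogonal. -/
theorem grayMap_preserves_duality (n : ℕ) :
    let φ : (Fin n → DualNumber (ZMod 2)) → ((Fin n ⊕ Fin n) → ZMod 2) :=
      fun x => Sum.elim (fun i => (x i).snd) (fun i => (x i).fst + (x i).snd)
    (∀ x y : Fin n → DualNumber (ZMod 2),
        (∑ i, x i * y i) = 0 → (∑ k, φ x k * φ y k) = 0) ∧
    (∀ C : Submodule (DualNumber (ZMod 2)) (Fin n → DualNumber (ZMod 2)),
        (∀ x ∈ C, ∀ y ∈ C, (∑ i, x i * y i) = 0) →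
        ∀ x ∈ C, ∀ y ∈ C, (∑ k, φ x k * φ y k) = 0) := by
  intro φ
  have orthogonal : ∀ x y : Fin n → DualNumber (ZMod 2),
      (∑ i, x i * y i) = 0 → (∑ k, φ x k * φ y k) = 0 :=
    fun _ _ => grayMap_dotProduct_grayMap_eq_zero
  exact ⟨orthogonal, fun C hC x hx y hy => orthogonal x y (hC x hx y hy)⟩
end
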